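/- arXiv:2311.18586 — 6 statements merged into one kernel-verified Lean document; each statement's English description precedes it below -/
import Mathlib

section
/- Let X be a Banach space, let φ : X → ℝ ∪ {+∞} be a proper lower semicontinuous function, and let x̄ ∈ dom φ. If φ is prox-bounded and the zero functional 0 ∈ X* is a proximal subgradient of φ at x̄, then there exists λ₀ > 0 such that for every λ with 0 < λ < λ₀ the proximal mapping is single-valued at x̄ with P_λφ(x̄) = {x̄}. -/
open Filter Topology

variable {X : Type*}

/-- Moreau envelope `e_λφ(x) = inf_w { φ(w) + (1/(2λ))‖w − x‖² }`, valued in `EReal`. -/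
noncomputable def moreauEnv [NormedAddCommGroup X] (lam : ℝ) (φ : X → EReal) (x : X) : EReal :=
  ⨅ w : X, φ w + (((1 / (2 * lam)) * ‖w - x‖ ^ 2 : ℝ) : EReal)

/-- Proximal mapping `P_λφ(x) = argmin_w { φ(w) + (1/(2λ))‖w − x‖² }`. -/
def proxSet [NormedAddCommGroup X] (lam : ℝ) (φ : X → EReal) (x : X) : Set X :=
  {w : X | ∀ v : X,
    φ w + (((1 / (2 * lam)) * ‖w - x‖ ^ 2 : ℝ) : EReal)
      ≤ φ v + (((1 / (2 * lam)) * ‖v - x‖ ^ 2 : ℝ) : EReal)}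

/-- A function `X → ℝ ∪ {+∞}` modeled as `X → EReal`: proper means not identically `+∞`
and never `−∞`. -/
def IsProper [NormedAddCommGroup X] (φ : X → EReal) : Prop :=
  (∃ x : X, φ x ≠ ⊤) ∧ ∀ x : X, φ x ≠ ⊥

/-- Prox-boundedness: `φ(y) ≥ α‖y − x̄‖² + β` for some `α, β ∈ ℝ`, `x̄ ∈ X`. -/
def ProxBounded [NormedAddCommGroup X] (φ : X → EReal) : Prop :=
  ∃ (a b : ℝ) (x0 : X), ∀ y : X, ((a * ‖y - x0‖ ^ 2 + b : ℝ) : EReal) ≤ φ y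

/-- Weak convergence of a sequence: `⟨f, u k⟩ → ⟨f, x⟩` for every continuous linear functional. -/
def WeakConv [NormedAddCommGroup X] [NormedSpace ℝ X] (u : ℕ → X) (x : X) : Prop :=
  ∀ f : X →L[ℝ] ℝ, Tendsto (fun k => f (u k)) atTop (𝓝 (f x))

/-- Weak sequential lower semicontinuity. -/
def WeakSeqLSC [NormedAddCommGroup X] [NormedSpace ℝ X] (φ : X → EReal) : Prop :=
  ∀ (x : X) (u : ℕ → X), WeakConv u x → φ x ≤ liminf (fun k => φ (u k)) atTop

/-- Sequential form of reflexivity: every bounded sequence has a weakly convergent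
subsequence. -/
def SeqReflexive (X : Type*) [NormedAddCommGroup X] [NormedSpace ℝ X] : Prop :=
  ∀ u : ℕ → X, (∃ C : ℝ, ∀ k, ‖u k‖ ≤ C) →
    ∃ (s : ℕ → ℕ) (z : X), StrictMono s ∧ WeakConv (u ∘ s) z

/-- Local minimizer. -/
def LocalMin [NormedAddCommGroup X] (g : X → EReal) (x0 : X) : Prop :=
  ∃ ε > (0 : ℝ), ∀ x : X, ‖x - x0‖ < ε → g x0 ≤ g x

/-- Strong local minimizer with modulus `σ`. -/
def StrongLocalMin [NormedAddCommGroup X] (g : X → EReal) (x0 : X) (σ : ℝ) : Prop :=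
  ∃ ε > (0 : ℝ), ∀ x : X, ‖x - x0‖ < ε →
    g x0 + (((σ / 2) * ‖x - x0‖ ^ 2 : ℝ) : EReal) ≤ g x

/-- The zero functional `0 ∈ X*` is a proximal subgradient of `φ` at `x0`. -/
def ZeroProxSubgradient [NormedAddCommGroup X] [NormedSpace ℝ X] (φ : X → EReal) (x0 : X) :
    Prop :=
  ∃ r > (0 : ℝ), ∃ ε > (0 : ℝ), ∀ x : X, ‖x - x0‖ < ε →
    φ x0 + ((((0 : X →L[ℝ] ℝ) (x - x0)) - (r / 2) * ‖x - x0‖ ^ 2 : ℝ) : EReal) ≤ φ x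

/-!
Near `xb` the proximal subgradient inequality gives `φ v ≥ φ xb - (r/2)‖v - xb‖²`; far from `xb`,
prox-boundedness (recentred at `xb`) gives a quadratic minorant `α‖v - xb‖² + β`. Once
`c = 1/(2λ)` exceeds `r/2` and makes `(α + c)ε² + β > φ xb`, the point `xb` is the strict global
minimiser of `φ + c‖· - xb‖²`, i.e. `P_λφ(xb) = {xb}`.
-/

theorem EReal.coe_lt_add_coe_of_coe_le {M p q : ℝ} {y : EReal} (hy : (p : EReal) ≤ y)
    (h : M < p + q) : (M : EReal) < y + q :=
  calc (M : EReal) < ((p + q : ℝ) : EReal) := EReal.coe_lt_coe_iff.mpr h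
    _ = p + q := EReal.coe_add p q
    _ ≤ y + q := add_le_add_left hy _

section NormedAddCommGroup

variable [NormedAddCommGroup X] {φ : X → EReal}

theorem ProxBounded.exists_minorant_at (hpb : ProxBounded φ) (xb : X) :
    ∃ α β : ℝ, ∀ y : X, ((α * ‖y - xb‖ ^ 2 + β : ℝ) : EReal) ≤ φ y := by
  obtain ⟨a, b, x0, hab⟩ := hpb
  set a' := min a 0
  set d := ‖xb - x0‖
  refine ⟨2 * a', 2 * a' * d ^ 2 + b, fun y => le_trans ?_ (hab y)⟩
  have hsq : ‖y - x0‖ ^ 2 ≤ 2 * ‖y - xb‖ ^ 2 + 2 * d ^ 2 := by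
    have htri : ‖y - x0‖ ≤ ‖y - xb‖ + d := norm_sub_le_norm_sub_add_norm_sub y xb x0
    nlinarith [norm_nonneg (y - x0), sq_nonneg (‖y - xb‖ - d)]
  have hmin : a' * ‖y - x0‖ ^ 2 ≤ a * ‖y - x0‖ ^ 2 :=
    mul_le_mul_of_nonneg_right (min_le_left _ _) (sq_nonneg _)
  have hscaled : a' * (2 * ‖y - xb‖ ^ 2 + 2 * d ^ 2) ≤ a' * ‖y - x0‖ ^ 2 :=
    mul_le_mul_of_nonpos_left hsq (min_le_right _ _)
  exact EReal.coe_le_coe_iff.mpr (by linarith)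

theorem ProxBounded.ne_bot (hpb : ProxBounded φ) (x : X) : φ x ≠ ⊥ := by
  obtain ⟨a, b, x0, hab⟩ := hpb
  exact ne_bot_of_le_ne_bot (EReal.coe_ne_bot _) (hab x)

theorem exists_lt_add_sq_norm_of_le_norm {xb : X} {α β : ℝ}
    (hmin : ∀ y : X, ((α * ‖y - xb‖ ^ 2 + β : ℝ) : EReal) ≤ φ y) (M : ℝ) {ε : ℝ} (hε : 0 < ε) :
    ∃ c₀ : ℝ, ∀ c > c₀, ∀ v : X, ε ≤ ‖v - xb‖ →
      (M : EReal) < φ v + ((c * ‖v - xb‖ ^ 2 : ℝ) : EReal) := by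
  refine ⟨max (-α) ((M - β) / ε ^ 2 - α), fun c hc v hv => ?_⟩
  refine EReal.coe_lt_add_coe_of_coe_le (hmin v) ?_
  have hpos : 0 < α + c := by linarith [le_max_left (-α) ((M - β) / ε ^ 2 - α)]
  have hfar : M - β < (α + c) * ε ^ 2 := by
    have := (le_max_right (-α) ((M - β) / ε ^ 2 - α)).trans_lt hc
    rw [← div_lt_iff₀ (by positivity)]
    linarith
  have hsq : ε ^ 2 ≤ ‖v - xb‖ ^ 2 := pow_le_pow_left₀ hε.le hv 2
  nlinarith [mul_le_mul_of_nonneg_left hsq hpos.le]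

end NormedAddCommGroup

section NormedSpace

variable [NormedAddCommGroup X] [NormedSpace ℝ X] {φ : X → EReal} {xb : X}

theorem ZeroProxSubgradient.exists_lt_add_sq_norm_of_norm_lt (hsub : ZeroProxSubgradient φ xb)
    {M : ℝ} (hM : φ xb = M) :
    ∃ c₀ > (0 : ℝ), ∃ ε > (0 : ℝ), ∀ c > c₀, ∀ v : X, v ≠ xb → ‖v - xb‖ < ε →
      (M : EReal) < φ v + ((c * ‖v - xb‖ ^ 2 : ℝ) : EReal) := by
  obtain ⟨r, hr, ε, hε, hloc⟩ := hsub
  refine ⟨r / 2, by positivity, ε, hε, fun c hc v hv hvε => ?_⟩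
  have hminor : ((M - r / 2 * ‖v - xb‖ ^ 2 : ℝ) : EReal) ≤ φ v := by
    have h := hloc v hvε
    rw [hM, zero_apply, zero_sub] at h
    rwa [sub_eq_add_neg, EReal.coe_add]
  refine EReal.coe_lt_add_coe_of_coe_le hminor ?_
  have hdist : 0 < ‖v - xb‖ ^ 2 := by positivity [sub_ne_zero.mpr hv]
  nlinarith

theorem exists_lt_add_sq_norm (hpb : ProxBounded φ) (hsub : ZeroProxSubgradient φ xb)
    (hdom : φ xb ≠ ⊤) :
    ∃ c₀ > (0 : ℝ), ∀ c > c₀, ∀ v : X, v ≠ xb →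
      φ xb < φ v + ((c * ‖v - xb‖ ^ 2 : ℝ) : EReal) := by
  set M := (φ xb).toReal
  have hM : φ xb = M := (EReal.coe_toReal hdom (hpb.ne_bot xb)).symm
  obtain ⟨c₁, hc₁, ε, hε, hnear⟩ := hsub.exists_lt_add_sq_norm_of_norm_lt hM
  obtain ⟨α, β, hmin⟩ := hpb.exists_minorant_at xb
  obtain ⟨c₂, hfar⟩ := exists_lt_add_sq_norm_of_le_norm hmin M hε
  refine ⟨max c₁ c₂, lt_max_of_lt_left hc₁, fun c hc v hv => hM ▸ ?_⟩
  rcases lt_or_ge ‖v - xb‖ ε with hvε | hvε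
  · exact hnear c ((le_max_left _ _).trans_lt hc) v hv hvε
  · exact hfar c ((le_max_right _ _).trans_lt hc) v hvε

end NormedSpace

theorem proxSet_eq_singleton_of_lt [NormedAddCommGroup X] {lam : ℝ} {φ : X → EReal} {x : X}
    (h : ∀ v : X, v ≠ x → φ x < φ v + (((1 / (2 * lam)) * ‖v - x‖ ^ 2 : ℝ) : EReal)) :
    proxSet lam φ x = {x} := by
  have hself : φ x + (((1 / (2 * lam)) * ‖x - x‖ ^ 2 : ℝ) : EReal) = φ x := by simp
  ext w
  simp only [proxSet, Set.mem_ofPred_eq, Set.mem_singleton_iff]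
  constructor
  · intro hw
    by_contra hwx
    exact (h w hwx).not_ge ((hw x).trans_eq hself)
  · intro hw v
    rw [hw, hself]
    rcases eq_or_ne v x with rfl | hv
    · exact le_of_eq hself.symm
    · exact (h v hv).le

theorem statement2_general [NormedAddCommGroup X] [NormedSpace ℝ X]
    (φ : X → EReal)
    (xb : X) (hdom : φ xb ≠ ⊤)
    (hpb : ProxBounded φ) (hsub : ZeroProxSubgradient φ xb) :
    ∃ lam0 > (0 : ℝ), ∀ lam : ℝ, 0 < lam → lam < lam0 → proxSet lam φ xb = {xb} := by
  obtain ⟨c₀, hc₀, hlt⟩ := exists_lt_add_sq_norm hpb hsub hdom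
  refine ⟨1 / (2 * c₀), by positivity, fun lam hlam hlam0 => proxSet_eq_singleton_of_lt ?_⟩
  have hc : c₀ < 1 / (2 * lam) := by
    rw [lt_div_iff₀ (by positivity)]
    rw [lt_div_iff₀ (by positivity)] at hlam0
    linarith
  exact hlt _ hc

/-- prox-boundedness plus `0` being a proximal subgradient at `x̄` imply
`P_λφ(x̄) = {x̄}` for all small `λ > 0`. -/
theorem statement2 [NormedAddCommGroup X] [NormedSpace ℝ X] [CompleteSpace X]
    (φ : X → EReal) (hproper : IsProper φ) (hlsc : LowerSemicontinuous φ)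
    (xb : X) (hdom : φ xb ≠ ⊤)
    (hpb : ProxBounded φ) (hsub : ZeroProxSubgradient φ xb) :
    ∃ lam0 > (0 : ℝ), ∀ lam : ℝ, 0 < lam → lam < lam0 → proxSet lam φ xb = {xb} :=
  statement2_general φ xb hdom hpb hsub
end

section
/- Let X be a reflexive Banach space and let φ : X → ℝ ∪ {+∞} be a proper, weakly sequentially lower semicontinuous function. Let λ > 0 be such that there exist λ₁ > λ and x₀ ∈ X with e_{λ₁}φ(x₀) > −∞ (i.e., λ is below the threshold of prox-boundedness of φ). Then for every x ∈ X the proximal set P_λφ(x) is nonempty. -/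
open Filter Topology

variable {X : Type*}

/-!
The direct method. Prox-boundedness at `λ₁ > λ` bounds `φ` below by
`m - ‖w - x₀‖² / (2λ₁)`, so the prox objective `w ↦ φ w + ‖w - x‖² / (2λ)` dominates a
positive multiple of `‖w - x‖²` minus a constant; its sublevel sets are therefore bounded.
A minimizing sequence then has a weakly convergent subsequence by reflexivity, and the
objective, a sum of two weakly sequentially lower semicontinuous functions, attains its
infimum at the weak limit.
-/

section

variable [NormedAddCommGroup X] [NormedSpace ℝ X]

theorem WeakSeqLSC.add {φ ψ : X → EReal} (hφ : WeakSeqLSC φ) (hψ : WeakSeqLSC ψ) :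
    WeakSeqLSC (φ + ψ) := fun z u hu =>
  (add_le_add (hφ z u hu) (hψ z u hu)).trans EReal.le_liminf_add

theorem weakSeqLSC_mul_sq_norm_sub {c : ℝ} (hc : 0 ≤ c) (x : X) :
    WeakSeqLSC fun w : X => ((c * ‖w - x‖ ^ 2 : ℝ) : EReal) := by
  intro z u hu
  -- a norming functional of `z - x` is a weakly continuous minorant of the norm
  obtain ⟨f, hf, hfz⟩ := exists_dual_vector'' ℝ (z - x)
  have hconv : Tendsto (fun k => f (u k - x)) atTop (𝓝 ‖z - x‖) := by
    have hfz' : f (z - x) = ‖z - x‖ := hfz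
    simpa only [map_sub, ← hfz'] using (hu f).sub_const (f x)
  have hlim : Tendsto (fun k => ((c * f (u k - x) ^ 2 : ℝ) : EReal)) atTop
      (𝓝 ((c * ‖z - x‖ ^ 2 : ℝ) : EReal)) :=
    EReal.tendsto_coe.2 ((hconv.pow 2).const_mul c)
  have hle : ∀ k, c * f (u k - x) ^ 2 ≤ c * ‖u k - x‖ ^ 2 := fun k => by
    have : |f (u k - x)| ≤ ‖u k - x‖ :=
      (f.le_opNorm _).trans (mul_le_of_le_one_left (norm_nonneg _) hf)
    exact mul_le_mul_of_nonneg_left (sq_le_sq.2 (by rwa [abs_norm])) hc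
  show ((c * ‖z - x‖ ^ 2 : ℝ) : EReal)
    ≤ liminf (fun k => ((c * ‖u k - x‖ ^ 2 : ℝ) : EReal)) atTop
  rw [← hlim.liminf_eq]
  exact liminf_le_liminf (Eventually.of_forall fun k => EReal.coe_le_coe_iff.2 (hle k))

theorem SeqReflexive.exists_forall_le (hrefl : SeqReflexive X) {g : X → EReal}
    (hg : WeakSeqLSC g) (hbdd : ∀ y : ℝ, ∃ C, ∀ w, g w ≤ y → ‖w‖ ≤ C) :
    ∃ z, ∀ v, g z ≤ g v := by
  set μ := ⨅ w, g w
  rcases eq_or_ne μ ⊤ with hμ | hμ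
  · exact ⟨0, fun v => by simp [iInf_eq_top.1 hμ]⟩
  obtain ⟨y, hμy, -⟩ := EReal.exists_between_coe_real (lt_top_iff_ne_top.2 hμ)
  obtain ⟨t, -, ht, htμ⟩ := exists_seq_strictAnti_tendsto' hμy
  choose u hu using fun k => iInf_lt_iff.1 (ht k).1
  obtain ⟨C, hC⟩ := hbdd y
  obtain ⟨s, z, hs, hz⟩ := hrefl u ⟨C, fun k => hC _ ((hu k).trans (ht k).2).le⟩
  refine ⟨z, fun v => ?_⟩
  calc g z ≤ liminf (fun k => g (u (s k))) atTop := hg z _ hz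
    _ ≤ liminf (fun k => t (s k)) atTop :=
      liminf_le_liminf (Eventually.of_forall fun k => (hu _).le)
    _ = μ := (htμ.comp hs.tendsto_atTop).liminf_eq
    _ ≤ g v := iInf_le _ v

end

section

variable [NormedAddCommGroup X]

theorem norm_le_of_quadratic_le {a b y : ℝ} (ha : 0 < a) {x w : X}
    (h : a * ‖w - x‖ ^ 2 + b ≤ y) : ‖w‖ ≤ ‖x‖ + √((y - b) / a) := by
  have hsq : ‖w - x‖ ≤ √((y - b) / a) :=
    Real.le_sqrt_of_sq_le ((le_div_iff₀ ha).2 (by linarith))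
  calc ‖w‖ = ‖x + (w - x)‖ := by rw [add_sub_cancel]
    _ ≤ ‖x‖ + ‖w - x‖ := norm_add_le _ _
    _ ≤ ‖x‖ + √((y - b) / a) := by gcongr

theorem exists_forall_norm_le_of_quadratic_le {g : X → EReal} {a b : ℝ} (ha : 0 < a) {x : X}
    (hg : ∀ w, ((a * ‖w - x‖ ^ 2 + b : ℝ) : EReal) ≤ g w) (y : ℝ) :
    ∃ C, ∀ w, g w ≤ y → ‖w‖ ≤ C :=
  ⟨‖x‖ + √((y - b) / a), fun w hw =>
    norm_le_of_quadratic_le ha (EReal.coe_le_coe_iff.1 ((hg w).trans hw))⟩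

theorem exists_le_add_sq_norm_sub_of_moreauEnv_ne_bot {lam1 : ℝ} {φ : X → EReal} {x0 : X}
    (hfin : moreauEnv lam1 φ x0 ≠ ⊥) :
    ∃ m : ℝ, ∀ w, (m : EReal) ≤ φ w + ((1 / (2 * lam1) * ‖w - x0‖ ^ 2 : ℝ) : EReal) := by
  obtain ⟨m, -, hm⟩ := EReal.exists_between_coe_real (bot_lt_iff_ne_bot.2 hfin)
  exact ⟨m, fun w => hm.le.trans (iInf_le _ w)⟩

theorem sq_norm_sub_lower_bound {c c1 : ℝ} (hc1 : 0 ≤ c1) (hcc1 : c1 < c) (x x0 w : X) :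
    (c - c1) / 2 * ‖w - x‖ ^ 2 - c1 * (1 + 2 * c1 / (c - c1)) * ‖x - x0‖ ^ 2
      ≤ c * ‖w - x‖ ^ 2 - c1 * ‖w - x0‖ ^ 2 := by
  set r := ‖w - x‖
  set D := ‖x - x0‖
  have hε : 0 < c - c1 := sub_pos.2 hcc1
  have hq : ‖w - x0‖ ≤ r + D := by simpa using norm_sub_le_norm_sub_add_norm_sub w x x0
  have hq2 : ‖w - x0‖ ^ 2 ≤ (r + D) ^ 2 := by gcongr
  have young : 2 * c1 * D * r ≤ (c - c1) / 2 * r ^ 2 + 2 * c1 ^ 2 * D ^ 2 / (c - c1) := by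
    have hsq : 0 ≤ ((c - c1) * r - 2 * c1 * D) ^ 2 / (2 * (c - c1)) := by positivity
    have : ((c - c1) * r - 2 * c1 * D) ^ 2 / (2 * (c - c1))
        = (c - c1) / 2 * r ^ 2 + 2 * c1 ^ 2 * D ^ 2 / (c - c1) - 2 * c1 * D * r := by
      field_simp
      ring
    linarith
  have expand :
      c1 * (1 + 2 * c1 / (c - c1)) * D ^ 2 = c1 * D ^ 2 + 2 * c1 ^ 2 * D ^ 2 / (c - c1) := by
    field_simp
  nlinarith [mul_le_mul_of_nonneg_left hq2 hc1]

theorem exists_quadratic_le_prox_objective {lam lam1 : ℝ} (h0 : 0 < lam) (h1 : lam < lam1)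
    {φ : X → EReal} {x0 : X} (hfin : moreauEnv lam1 φ x0 ≠ ⊥) (x : X) :
    ∃ a > 0, ∃ b : ℝ, ∀ w,
      ((a * ‖w - x‖ ^ 2 + b : ℝ) : EReal)
        ≤ φ w + ((1 / (2 * lam) * ‖w - x‖ ^ 2 : ℝ) : EReal) := by
  obtain ⟨m, hm⟩ := exists_le_add_sq_norm_sub_of_moreauEnv_ne_bot hfin
  have hlam1 : 0 < lam1 := h0.trans h1
  set c := 1 / (2 * lam)
  set c1 := 1 / (2 * lam1)
  have hc1 : 0 ≤ c1 := by positivity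
  have hcc1 : c1 < c := one_div_lt_one_div_of_lt (by positivity) (by linarith)
  refine ⟨(c - c1) / 2, by linarith, m - c1 * (1 + 2 * c1 / (c - c1)) * ‖x - x0‖ ^ 2,
    fun w => ?_⟩
  calc ((((c - c1) / 2) * ‖w - x‖ ^ 2 + (m - c1 * (1 + 2 * c1 / (c - c1)) * ‖x - x0‖ ^ 2)
        : ℝ) : EReal)
      ≤ ((m + (c * ‖w - x‖ ^ 2 - c1 * ‖w - x0‖ ^ 2) : ℝ) : EReal) := by
        have := sq_norm_sub_lower_bound hc1 hcc1 x x0 w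
        exact EReal.coe_le_coe_iff.2 (by linarith)
    _ ≤ φ w + ((c1 * ‖w - x0‖ ^ 2 : ℝ) : EReal)
          + ((c * ‖w - x‖ ^ 2 - c1 * ‖w - x0‖ ^ 2 : ℝ) : EReal) := by
        rw [EReal.coe_add]
        exact add_le_add_left (hm w) _
    _ = φ w + ((c * ‖w - x‖ ^ 2 : ℝ) : EReal) := by
        rw [add_assoc, ← EReal.coe_add, add_sub_cancel]

end

theorem statement5_general [NormedAddCommGroup X] [NormedSpace ℝ X]
    (hrefl : SeqReflexive X)
    (φ : X → EReal) (hwlsc : WeakSeqLSC φ)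
    (lam lam1 : ℝ) (x0 : X) (h0 : 0 < lam) (h1 : lam < lam1)
    (hfin : moreauEnv lam1 φ x0 ≠ ⊥) :
    ∀ x : X, (proxSet lam φ x).Nonempty := by
  intro x
  obtain ⟨a, ha, b, hquad⟩ := exists_quadratic_le_prox_objective h0 h1 hfin x
  have hlsc := hwlsc.add (weakSeqLSC_mul_sq_norm_sub (by positivity : 0 ≤ 1 / (2 * lam)) x)
  exact hrefl.exists_forall_le hlsc (exists_forall_norm_le_of_quadratic_le ha hquad)

/-- in a (sequentially) reflexive Banach space, for a proper weakly
sequentially l.s.c. function and `λ` below the prox-boundedness threshold, the proximal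
set `P_λφ(x)` is nonempty for every `x`. -/
theorem statement5 [NormedAddCommGroup X] [NormedSpace ℝ X] [CompleteSpace X]
    (hrefl : SeqReflexive X)
    (φ : X → EReal) (hproper : IsProper φ) (hwlsc : WeakSeqLSC φ)
    (lam lam1 : ℝ) (x0 : X) (h0 : 0 < lam) (h1 : lam < lam1)
    (hfin : moreauEnv lam1 φ x0 ≠ ⊥) :
    ∀ x : X, (proxSet lam φ x).Nonempty :=
  statement5_general hrefl φ hwlsc lam lam1 x0 h0 h1 hfin
end

section
/- Let X be a reflexive Banach space and let φ : X → ℝ ∪ {+∞} be a proper, weakly sequentially lower semicontinuous function. Let λ > 0 be such that there exist λ₁ > λ and x₀ ∈ X with e_{λ₁}φ(x₀) > −∞. If (x_k) is a sequence converging strongly to x̄ ∈ X and w_k ∈ P_λφ(x_k) for every k, then the sequence (w_k) is bounded in X. -/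
open Filter Topology

variable {X : Type*}

/-!
Put `c = 1/(2λ)` and `c₁ = 1/(2λ₁)`, so `c₁ < c`. Finiteness of `e_{λ₁}φ(x₀)` gives a real `m` with
`m ≤ φ(w) + c₁‖w - x₀‖²` for all `w`, and comparing a proximal point `w ∈ P_λφ(x)` with a point `v`
where `φ` is finite gives `φ(w) + c‖w - x‖² ≤ φ(v) + c‖v - x‖²`. Eliminating `φ(w)` leaves
`(c - c₁)‖w - x‖² ≤ K + b‖w - x‖` with `K`, `b` bounded while `x` stays bounded, so `‖w - x‖` is
bounded. Strongly convergent sequences are bounded, hence so are their proximal points.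
-/

open Bornology

theorem le_one_add_of_mul_sq_le_add_mul_sq {c c₁ K s t : ℝ} (hc₁ : 0 ≤ c₁) (hc : c₁ < c)
    (hs : 0 ≤ s) (h : c * t ^ 2 ≤ K + c₁ * (t + s) ^ 2) :
    t ≤ 1 + (|K| + c₁ * s ^ 2 + 2 * c₁ * s) / (c - c₁) := by
  have hcc : 0 < c - c₁ := sub_pos.2 hc
  have hbound : 0 ≤ (|K| + c₁ * s ^ 2 + 2 * c₁ * s) / (c - c₁) := by positivity
  rcases le_or_gt t 1 with ht1 | ht1
  · linarith
  · suffices t ≤ (|K| + c₁ * s ^ 2 + 2 * c₁ * s) / (c - c₁) by linarith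
    rw [le_div_iff₀ hcc]
    -- for `t > 1` the constant terms are at most `t` times themselves; then divide by `t`
    have hK : K + c₁ * s ^ 2 ≤ (|K| + c₁ * s ^ 2) * t := by
      nlinarith [le_abs_self K, abs_nonneg K, mul_nonneg hc₁ (sq_nonneg s)]
    nlinarith [mul_nonneg hc₁ hs]

section

variable [NormedAddCommGroup X] {φ : X → EReal}

theorem exists_le_add_sq_of_moreauEnv_ne_bot {lam : ℝ} {x₀ : X} (h : moreauEnv lam φ x₀ ≠ ⊥) :
    ∃ m : ℝ, ∀ v, (m : EReal) ≤ φ v + ((1 / (2 * lam) * ‖v - x₀‖ ^ 2 : ℝ) : EReal) := by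
  obtain ⟨m, -, hm⟩ := EReal.lt_iff_exists_real_btwn.1 (bot_lt_iff_ne_bot.2 h)
  exact ⟨m, fun v => hm.le.trans (iInf_le _ v)⟩

theorem add_sq_le_of_mem_proxSet {lam lam₁ m : ℝ} {x x₀ v w : X}
    (hm : ∀ u, (m : EReal) ≤ φ u + ((1 / (2 * lam₁) * ‖u - x₀‖ ^ 2 : ℝ) : EReal))
    (hv : φ v ≠ ⊤) (hw : w ∈ proxSet lam φ x) :
    m + 1 / (2 * lam) * ‖w - x‖ ^ 2 ≤
      (φ v).toReal + 1 / (2 * lam) * ‖v - x‖ ^ 2 + 1 / (2 * lam₁) * ‖w - x₀‖ ^ 2 := by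
  set a := 1 / (2 * lam) * ‖w - x‖ ^ 2
  set b := 1 / (2 * lam) * ‖v - x‖ ^ 2
  set d := 1 / (2 * lam₁) * ‖w - x₀‖ ^ 2
  have hv_bot : φ v ≠ ⊥ := by
    intro hbot
    simpa [hbot] using hm v
  have key : ((m + a : ℝ) : EReal) ≤ (((φ v).toReal + b + d : ℝ) : EReal) :=
    calc ((m + a : ℝ) : EReal) = m + a := EReal.coe_add m a
      _ ≤ φ w + d + a := by gcongr; exact hm w
      _ = (φ w + a) + d := by rw [add_assoc, add_comm (d : EReal), ← add_assoc]
      _ ≤ (φ v + b) + d := add_le_add (hw v) le_rfl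
      _ = (((φ v).toReal + b + d : ℝ) : EReal) := by
        rw [← EReal.coe_toReal hv hv_bot]; norm_cast
  exact_mod_cast key

theorem isBounded_biUnion_proxSet {lam lam₁ : ℝ} {x₀ : X} (h0 : 0 < lam) (h1 : lam < lam₁)
    (hfin : moreauEnv lam₁ φ x₀ ≠ ⊥) (hdom : ∃ v, φ v ≠ ⊤) {s : Set X} (hs : IsBounded s) :
    IsBounded (⋃ x ∈ s, proxSet lam φ x) := by
  obtain ⟨m, hm⟩ := exists_le_add_sq_of_moreauEnv_ne_bot hfin
  obtain ⟨v, hv⟩ := hdom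
  obtain ⟨R, hR⟩ := isBounded_iff_forall_norm_le.1 hs
  set c := 1 / (2 * lam)
  set c₁ := 1 / (2 * lam₁)
  have hc₁ : 0 < c₁ := by have : 0 < lam₁ := h0.trans h1; positivity
  have hc : c₁ < c := one_div_lt_one_div_of_lt (by positivity) (by linarith)
  set S := R + ‖x₀‖
  set K := (φ v).toReal - m + c * (‖v‖ + R) ^ 2
  refine isBounded_iff_forall_norm_le.2
    ⟨1 + (|K| + c₁ * S ^ 2 + 2 * c₁ * S) / (c - c₁) + R, fun w hw => ?_⟩
  obtain ⟨x, hx, hw⟩ := Set.mem_iUnion₂.1 hw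
  have hxR : ‖x‖ ≤ R := hR x hx
  have hS : 0 ≤ S := by linarith [norm_nonneg x, norm_nonneg x₀]
  have hvx : ‖v - x‖ ≤ ‖v‖ + R := (norm_sub_le v x).trans (by linarith)
  have hwx₀ : ‖w - x₀‖ ≤ ‖w - x‖ + S :=
    calc ‖w - x₀‖ ≤ ‖w - x‖ + ‖x - x₀‖ := norm_sub_le_norm_sub_add_norm_sub w x x₀
      _ ≤ ‖w - x‖ + S := by linarith [norm_sub_le x x₀]
  have hquad : c * ‖w - x‖ ^ 2 ≤ K + c₁ * (‖w - x‖ + S) ^ 2 := by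
    have hest := add_sq_le_of_mem_proxSet hm hv hw
    have : c * ‖v - x‖ ^ 2 ≤ c * (‖v‖ + R) ^ 2 := by gcongr
    have : c₁ * ‖w - x₀‖ ^ 2 ≤ c₁ * (‖w - x‖ + S) ^ 2 := by gcongr
    linarith
  have ht := le_one_add_of_mul_sq_le_add_mul_sq hc₁.le hc hS hquad
  calc ‖w‖ = ‖(w - x) + x‖ := by rw [sub_add_cancel]
    _ ≤ ‖w - x‖ + ‖x‖ := norm_add_le _ _
    _ ≤ _ := add_le_add ht hxR

end

theorem statement6_general [NormedAddCommGroup X]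
    (φ : X → EReal) (hproper : IsProper φ)
    (lam lam1 : ℝ) (x0 : X) (h0 : 0 < lam) (h1 : lam < lam1)
    (hfin : moreauEnv lam1 φ x0 ≠ ⊥)
    (x : ℕ → X) (xb : X) (hx : Tendsto x atTop (𝓝 xb))
    (w : ℕ → X) (hw : ∀ k, w k ∈ proxSet lam φ (x k)) :
    ∃ C : ℝ, ∀ k, ‖w k‖ ≤ C := by
  have hrange : Set.range w ⊆ ⋃ y ∈ Set.range x, proxSet lam φ y := by
    rintro _ ⟨k, rfl⟩
    exact Set.mem_biUnion (Set.mem_range_self k) (hw k)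
  obtain ⟨C, hC⟩ := isBounded_iff_forall_norm_le.1 <|
    (isBounded_biUnion_proxSet h0 h1 hfin hproper.1 (Metric.isBounded_range_of_tendsto x hx)).subset
      hrange
  exact ⟨C, fun k => hC _ (Set.mem_range_self k)⟩

/-- boundedness of sequences of proximal points along a strongly convergent
sequence of base points. -/
theorem statement6 [NormedAddCommGroup X] [NormedSpace ℝ X] [CompleteSpace X]
    (hrefl : SeqReflexive X)
    (φ : X → EReal) (hproper : IsProper φ) (hwlsc : WeakSeqLSC φ)
    (lam lam1 : ℝ) (x0 : X) (h0 : 0 < lam) (h1 : lam < lam1)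
    (hfin : moreauEnv lam1 φ x0 ≠ ⊥)
    (x : ℕ → X) (xb : X) (hx : Tendsto x atTop (𝓝 xb))
    (w : ℕ → X) (hw : ∀ k, w k ∈ proxSet lam φ (x k)) :
    ∃ C : ℝ, ∀ k, ‖w k‖ ≤ C :=
  statement6_general φ hproper lam lam1 x0 h0 h1 hfin x xb hx w hw
end

section
/- Let X be a reflexive Banach space and let φ : X → ℝ ∪ {+∞} be a proper, weakly sequentially lower semicontinuous function. Let λ > 0 be such that there exist λ₁ > λ and x₀ ∈ X with e_{λ₁}φ(x₀) > −∞. If (x_k) is a sequence converging strongly to x̄ ∈ X, w_k ∈ P_λφ(x_k) for every k, and ŵ ∈ X is a weak sequential accumulation point of (w_k) (i.e., some subsequence of (w_k) converges weakly to ŵ), then ŵ ∈ P_λφ(x̄). -/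
open Filter Topology

variable {X : Type*}

/-!
Weak lower semicontinuity passes to the limit in the prox inequality
`φ (w k) + c ‖w k - x k‖² ≤ φ v + c ‖v - x k‖²`. For `φ` this is the hypothesis; for the squared
distance `‖w k - x k‖²` it comes from the affine minorant `‖z‖² ≥ 2 ‖ẑ‖ g z - ‖ẑ‖²`, where `g` is a
norming functional of the weak limit `ẑ = ŵ - x̄`: the minorant converges to `‖ẑ‖²`, so no
boundedness of the sequence is needed.
-/

section

variable [NormedAddCommGroup X] [NormedSpace ℝ X]

theorem WeakConv.sub_tendsto {u v : ℕ → X} {x y : X} (hu : WeakConv u x)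
    (hv : Tendsto v atTop (𝓝 y)) : WeakConv (u - v) (x - y) := fun f => by
  simpa only [Pi.sub_apply, map_sub, Function.comp_apply] using (hu f).sub ((f.continuous.tendsto y).comp hv)

theorem two_mul_sub_sq_le_norm_sq {f : X →L[ℝ] ℝ} (hf : ‖f‖ ≤ 1) (r : ℝ) (z : X) :
    2 * r * f z - r ^ 2 ≤ ‖z‖ ^ 2 := by
  have hfz : |f z| ≤ ‖z‖ := (f.le_opNorm z).trans (mul_le_of_le_one_left (norm_nonneg z) hf)
  nlinarith [sq_nonneg (f z - r), sq_abs (f z), abs_nonneg (f z)]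

theorem WeakConv.exists_tendsto_le_norm_sq {u : ℕ → X} {x : X} (hu : WeakConv u x) :
    ∃ g : ℕ → ℝ, (∀ k, g k ≤ ‖u k‖ ^ 2) ∧ Tendsto g atTop (𝓝 (‖x‖ ^ 2)) := by
  obtain ⟨f, hf, hfx⟩ := exists_dual_vector'' ℝ x
  refine ⟨fun k => 2 * ‖x‖ * f (u k) - ‖x‖ ^ 2, fun k => two_mul_sub_sq_le_norm_sq hf _ _, ?_⟩
  have hfx' : f x = ‖x‖ := hfx
  convert ((hu f).const_mul (2 * ‖x‖)).sub_const (‖x‖ ^ 2) using 2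
  rw [hfx']
  ring

theorem EReal.tendsto_const_add_coe {b : EReal} {h : ℕ → ℝ} {β : ℝ}
    (hh : Tendsto h atTop (𝓝 β)) :
    Tendsto (fun k => b + (h k : EReal)) atTop (𝓝 (b + β)) :=
  (EReal.continuousAt_add (p := (b, (β : EReal))) (Or.inr (EReal.coe_ne_bot β))
    (Or.inr (EReal.coe_ne_top β))).tendsto.comp
    (tendsto_const_nhds.prodMk_nhds ((continuous_coe_real_ereal.tendsto β).comp hh))

theorem EReal.liminf_add_le_of_add_le {a : ℕ → EReal} {b : EReal} {g h : ℕ → ℝ} {α β : ℝ}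
    (hg : Tendsto g atTop (𝓝 α)) (hh : Tendsto h atTop (𝓝 β))
    (hle : ∀ k, a k + g k ≤ b + h k) : liminf a atTop + α ≤ b + β :=
  calc liminf a atTop + α
      = liminf a atTop + liminf (fun k => (g k : EReal)) atTop :=
        congrArg _ ((continuous_coe_real_ereal.tendsto α).comp hg).liminf_eq.symm
    _ ≤ liminf (fun k => a k + g k) atTop := EReal.le_liminf_add
    _ ≤ liminf (fun k => b + (h k : EReal)) atTop := liminf_le_liminf (Eventually.of_forall hle)
    _ = b + β := (EReal.tendsto_const_add_coe hh).liminf_eq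

end

theorem statement7_general [NormedAddCommGroup X] [NormedSpace ℝ X]
    (φ : X → EReal) (hwlsc : WeakSeqLSC φ)
    (lam : ℝ) (h0 : 0 < lam)
    (x : ℕ → X) (xb : X) (hx : Tendsto x atTop (𝓝 xb))
    (w : ℕ → X) (hw : ∀ k, w k ∈ proxSet lam φ (x k))
    (wh : X) (s : ℕ → ℕ) (hs : StrictMono s) (hconv : WeakConv (w ∘ s) wh) :
    wh ∈ proxSet lam φ xb := by
  intro v
  have hc : 0 ≤ 1 / (2 * lam) := by positivity
  have hxs : Tendsto (x ∘ s) atTop (𝓝 xb) := hx.comp hs.tendsto_atTop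
  obtain ⟨g, hg_le, hg⟩ := (hconv.sub_tendsto hxs).exists_tendsto_le_norm_sq
  have hv : Tendsto (fun k => ‖v - x (s k)‖ ^ 2) atTop (𝓝 (‖v - xb‖ ^ 2)) :=
    ((hxs.const_sub v).norm).pow 2
  calc φ wh + ((1 / (2 * lam) * ‖wh - xb‖ ^ 2 : ℝ) : EReal)
      ≤ liminf (fun k => φ (w (s k))) atTop + ((1 / (2 * lam) * ‖wh - xb‖ ^ 2 : ℝ) : EReal) :=
        add_le_add_left (hwlsc wh _ hconv) _
    _ ≤ φ v + ((1 / (2 * lam) * ‖v - xb‖ ^ 2 : ℝ) : EReal) :=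
        EReal.liminf_add_le_of_add_le (hg.const_mul _) (hv.const_mul _) fun k =>
          (add_le_add_right (EReal.coe_le_coe_iff.2
            (mul_le_mul_of_nonneg_left (hg_le k) hc)) _).trans (hw (s k) v)

/-- every weak sequential accumulation point of proximal points along a
strongly convergent sequence of base points belongs to `P_λφ(x̄)`. -/
theorem statement7 [NormedAddCommGroup X] [NormedSpace ℝ X] [CompleteSpace X]
    (hrefl : SeqReflexive X)
    (φ : X → EReal) (hproper : IsProper φ) (hwlsc : WeakSeqLSC φ)
    (lam lam1 : ℝ) (x0 : X) (h0 : 0 < lam) (h1 : lam < lam1)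
    (hfin : moreauEnv lam1 φ x0 ≠ ⊥)
    (x : ℕ → X) (xb : X) (hx : Tendsto x atTop (𝓝 xb))
    (w : ℕ → X) (hw : ∀ k, w k ∈ proxSet lam φ (x k))
    (wh : X) (s : ℕ → ℕ) (hs : StrictMono s) (hconv : WeakConv (w ∘ s) wh) :
    wh ∈ proxSet lam φ xb :=
  statement7_general φ hwlsc lam h0 x xb hx w hw wh s hs hconv
end

section
/- Let X be a Banach space, let φ : X → ℝ ∪ {+∞} be a proper lower semicontinuous function, let x̄ ∈ dom φ, and let λ > 0. If x̄ is a local minimizer of the Moreau envelope e_λφ and ȳ ∈ P_λφ(x̄), then ȳ = x̄; consequently P_λφ(x̄) ⊆ {x̄}. -/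
open Filter Topology

variable {X : Type*}

/-!
If `w ≠ x` is a proximal point of `x`, moving `x` to `x + t • (w - x)` keeps the candidate `w`
with the same value `φ w` but shrinks its distance by the factor `1 - t`, so the envelope
strictly decreases at points arbitrarily close to `x`: `x` cannot be a local minimizer.
-/

section Moreau

variable [NormedAddCommGroup X] {lam : ℝ} {φ : X → EReal} {x w : X}

lemma moreauEnv_le (lam : ℝ) (φ : X → EReal) (x w : X) :
    moreauEnv lam φ x ≤ φ w + (((1 / (2 * lam)) * ‖w - x‖ ^ 2 : ℝ) : EReal) :=
  iInf_le (fun v => φ v + (((1 / (2 * lam)) * ‖v - x‖ ^ 2 : ℝ) : EReal)) w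

lemma moreauEnv_eq_of_mem_proxSet (hw : w ∈ proxSet lam φ x) :
    moreauEnv lam φ x = φ w + (((1 / (2 * lam)) * ‖w - x‖ ^ 2 : ℝ) : EReal) :=
  le_antisymm (moreauEnv_le lam φ x w) (le_iInf hw)

lemma ne_top_of_mem_proxSet (hw : w ∈ proxSet lam φ x) (hx : φ x ≠ ⊤) : φ w ≠ ⊤ := by
  intro htop
  have h := hw x
  rw [htop, EReal.top_add_coe, top_le_iff, sub_self, norm_zero] at h
  exact hx (by simpa using h)

lemma moreauEnv_add_smul_lt [NormedSpace ℝ X] (hlam : 0 < lam) (hw : w ∈ proxSet lam φ x)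
    (htop : φ w ≠ ⊤) (hbot : φ w ≠ ⊥) (hne : w ≠ x) {t : ℝ} (ht0 : 0 < t) (ht1 : t < 1) :
    moreauEnv lam φ (x + t • (w - x)) < moreauEnv lam φ x := by
  obtain ⟨r, hr⟩ : ∃ r : ℝ, φ w = r := ⟨(φ w).toReal, (EReal.coe_toReal htop hbot).symm⟩
  set c := 1 / (2 * lam)
  set d := ‖w - x‖
  have hc : 0 < c := by positivity
  have hd : 0 < d := norm_pos_iff.mpr (sub_ne_zero.mpr hne)
  have hdist : ‖w - (x + t • (w - x))‖ = (1 - t) * d := by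
    rw [show w - (x + t • (w - x)) = (1 - t) • (w - x) by module, norm_smul,
      Real.norm_of_nonneg (by linarith)]
  have hshrink : c * ((1 - t) * d) ^ 2 < c * d ^ 2 := by
    have : (1 - t) * d < d := by nlinarith
    gcongr
  calc moreauEnv lam φ (x + t • (w - x))
      ≤ φ w + ((c * ‖w - (x + t • (w - x))‖ ^ 2 : ℝ) : EReal) := moreauEnv_le lam φ _ w
    _ = ((r + c * ((1 - t) * d) ^ 2 : ℝ) : EReal) := by rw [hr, hdist]; rfl
    _ < ((r + c * d ^ 2 : ℝ) : EReal) := EReal.coe_lt_coe_iff.mpr (by linarith)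
    _ = moreauEnv lam φ x := by rw [moreauEnv_eq_of_mem_proxSet hw, hr]; rfl

theorem eq_of_mem_proxSet_of_localMin [NormedSpace ℝ X] (hbot : ∀ y, φ y ≠ ⊥) (hx : φ x ≠ ⊤)
    (hlam : 0 < lam) (hmin : LocalMin (moreauEnv lam φ) x) (hw : w ∈ proxSet lam φ x) :
    w = x := by
  by_contra hne
  obtain ⟨ε, hε, hloc⟩ := hmin
  have hseg : Tendsto (fun t : ℝ => x + t • (w - x)) (𝓝[>] 0) (𝓝 x) := by
    have hcont : Continuous (fun t : ℝ => x + t • (w - x)) := by fun_prop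
    simpa using (hcont.tendsto 0).mono_left nhdsWithin_le_nhds
  obtain ⟨t, hnear, ht0, ht1⟩ :=
    ((hseg.eventually (Metric.ball_mem_nhds x hε)).and (Ioo_mem_nhdsGT one_pos)).exists
  refine (moreauEnv_add_smul_lt hlam hw (ne_top_of_mem_proxSet hw hx) (hbot w) hne ht0 ht1).not_ge
    (hloc _ ?_)
  simpa [dist_eq_norm] using hnear

end Moreau

theorem statement10_general [NormedAddCommGroup X] [NormedSpace ℝ X]
    (φ : X → EReal) (hproper : IsProper φ)
    (xb : X) (hdom : φ xb ≠ ⊤) (lam : ℝ) (hlam : 0 < lam)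
    (hmin : LocalMin (moreauEnv lam φ) xb)
    (yb : X) (hyb : yb ∈ proxSet lam φ xb) :
    yb = xb ∧ proxSet lam φ xb ⊆ {xb} :=
  ⟨eq_of_mem_proxSet_of_localMin hproper.2 hdom hlam hmin hyb,
    fun _ hw => eq_of_mem_proxSet_of_localMin hproper.2 hdom hlam hmin hw⟩

/-- if `x̄` is a local minimizer of `e_λφ` and `ȳ ∈ P_λφ(x̄)`, then
`ȳ = x̄`; consequently `P_λφ(x̄) ⊆ {x̄}`. -/
theorem statement10 [NormedAddCommGroup X] [NormedSpace ℝ X] [CompleteSpace X]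
    (φ : X → EReal) (hproper : IsProper φ) (hlsc : LowerSemicontinuous φ)
    (xb : X) (hdom : φ xb ≠ ⊤) (lam : ℝ) (hlam : 0 < lam)
    (hmin : LocalMin (moreauEnv lam φ) xb)
    (yb : X) (hyb : yb ∈ proxSet lam φ xb) :
    yb = xb ∧ proxSet lam φ xb ⊆ {xb} :=
  statement10_general φ hproper xb hdom lam hlam hmin yb hyb
end

section
/- Let X be a Hilbert space, let φ : X → ℝ ∪ {+∞} be a proper, prox-bounded, lower semicontinuous function, let x̄ ∈ X, let σ ≠ 0, and define the quadratically σ-shifted function ψ(x) := φ(x) − (σ/2)‖x − x̄‖². Then for all λ ∈ (0, 1/|σ|) and all x ∈ X one has the equality (of values in ℝ ∪ {−∞}): e_λφ(x) = e_{λ/(1+σλ)}ψ( (x + σλ x̄)/(1 + σλ) ) + (σ/(2(1+σλ)))‖x − x̄‖². -/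
open Filter Topology

variable {X : Type*}

/-!
Adding `-(σ/2)‖w − x̄‖²` to `φ` and rescaling the quadratic penalty is an exact completion of
the square: for every `w`,
`(1/(2λ))‖w − x‖² = −(σ/2)‖w − x̄‖² + ((1+σλ)/(2λ))‖w − y‖² + (σ/(2(1+σλ)))‖x − x̄‖²`
with `y = (x + σλ x̄)/(1 + σλ)`. So the two infima agree term by term.
-/

theorem EReal.iInf_add_coe {ι : Sort*} [Nonempty ι] (G : ι → EReal) (c : ℝ) :
    ⨅ i, (G i + c) = (⨅ i, G i) + c := by
  apply le_antisymm
  · rw [← EReal.sub_le_iff_le_add (.inl (EReal.coe_ne_bot c)) (.inl (EReal.coe_ne_top c))]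
    refine le_iInf fun i => ?_
    calc (⨅ i, (G i + c)) - c ≤ (G i + c) - c := EReal.sub_le_sub (iInf_le _ i) le_rfl
      _ = G i := EReal.add_sub_cancel_right
  · exact le_iInf fun i => add_le_add (iInf_le _ i) le_rfl

theorem quadratic_penalty_eq_shifted_penalty [NormedAddCommGroup X] [InnerProductSpace ℝ X]
    {σ lam : ℝ} (hlam : lam ≠ 0) (ht : 1 + σ * lam ≠ 0) (w x xb : X) :
    (1 / (2 * lam)) * ‖w - x‖ ^ 2 =
      -(σ / 2) * ‖w - xb‖ ^ 2
        + (1 / (2 * (lam / (1 + σ * lam)))) * ‖w - (1 + σ * lam)⁻¹ • (x + (σ * lam) • xb)‖ ^ 2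
        + (σ / (2 * (1 + σ * lam))) * ‖x - xb‖ ^ 2 := by
  have hy : w - (1 + σ * lam)⁻¹ • (x + (σ * lam) • xb) =
      (1 + σ * lam)⁻¹ • ((w - x) + (σ * lam) • (w - xb)) := by
    match_scalars <;> field_simp
  have hx : x - xb = (w - xb) - (w - x) := by abel
  rw [hy, hx]
  generalize w - x = a, w - xb = b
  generalize ht' : 1 + σ * lam = t at ht ⊢
  rw [norm_smul, mul_pow, Real.norm_eq_abs, sq_abs, norm_add_sq_real, norm_sub_sq_real,
    inner_smul_right, real_inner_comm b a, norm_smul, Real.norm_eq_abs, mul_pow, sq_abs]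
  field_simp
  subst ht'
  ring

theorem moreauEnv_eq_moreauEnv_quadratic_shift [NormedAddCommGroup X] [InnerProductSpace ℝ X]
    (φ : X → EReal) (xb : X) {σ lam : ℝ} (hlam : lam ≠ 0) (ht : 1 + σ * lam ≠ 0) (x : X) :
    moreauEnv lam φ x =
      moreauEnv (lam / (1 + σ * lam))
          (fun w => φ w + ((-(σ / 2) * ‖w - xb‖ ^ 2 : ℝ) : EReal))
          ((1 + σ * lam)⁻¹ • (x + (σ * lam) • xb))
        + (((σ / (2 * (1 + σ * lam))) * ‖x - xb‖ ^ 2 : ℝ) : EReal) := by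
  rw [moreauEnv, moreauEnv, ← EReal.iInf_add_coe]
  refine iInf_congr fun w => ?_
  rw [quadratic_penalty_eq_shifted_penalty hlam ht w x xb]
  simp only [EReal.coe_add, add_assoc]

theorem statement12_general [NormedAddCommGroup X] [InnerProductSpace ℝ X]
    (φ : X → EReal)
    (xb : X) (σ : ℝ)
    (ψ : X → EReal) (hψ : ∀ x, ψ x = φ x + ((-(σ / 2) * ‖x - xb‖ ^ 2 : ℝ) : EReal))
    (lam : ℝ) (h0 : 0 < lam) (h1 : lam < 1 / |σ|) (x : X) :
    moreauEnv lam φ x =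
      moreauEnv (lam / (1 + σ * lam)) ψ ((1 + σ * lam)⁻¹ • (x + (σ * lam) • xb))
        + (((σ / (2 * (1 + σ * lam))) * ‖x - xb‖ ^ 2 : ℝ) : EReal) := by
  have habs : 0 < |σ| := one_div_pos.mp (h0.trans h1)
  have hsl : |σ| * lam < 1 := (lt_div_iff₀' habs).mp h1
  have ht : 0 < 1 + σ * lam := by nlinarith [neg_abs_le σ]
  rw [show ψ = _ from funext hψ]
  exact moreauEnv_eq_moreauEnv_quadratic_shift φ xb h0.ne' ht.ne' x

/-- Moreau envelope of `φ` expressed via the envelope of the quadratically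
`σ`-shifted function `ψ(x) = φ(x) − (σ/2)‖x − x̄‖²`, for `λ ∈ (0, 1/|σ|)`. -/
theorem statement12 [NormedAddCommGroup X] [InnerProductSpace ℝ X] [CompleteSpace X]
    (φ : X → EReal) (hproper : IsProper φ) (hpb : ProxBounded φ)
    (hlsc : LowerSemicontinuous φ)
    (xb : X) (σ : ℝ) (hσ : σ ≠ 0)
    (ψ : X → EReal) (hψ : ∀ x, ψ x = φ x + ((-(σ / 2) * ‖x - xb‖ ^ 2 : ℝ) : EReal))
    (lam : ℝ) (h0 : 0 < lam) (h1 : lam < 1 / |σ|) (x : X) :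
    moreauEnv lam φ x =
      moreauEnv (lam / (1 + σ * lam)) ψ ((1 + σ * lam)⁻¹ • (x + (σ * lam) • xb))
        + (((σ / (2 * (1 + σ * lam))) * ‖x - xb‖ ^ 2 : ℝ) : EReal) :=
  statement12_general φ xb σ ψ hψ lam h0 h1 x
end
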